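/- arXiv:2505.19132 — 9 statements merged into one kernel-verified Lean document; each statement's English description precedes it below -/
import Mathlib

section
/- Let S and P be symmetric involutions of an n-dimensional real inner product space V, let r = dim E₊(S) with orthonormal basis {ξ₁,…,ξ_r}. Then tr(SPSP) = n − 4r + 4·Σ_{i,j=1}^{r} ⟨Pξᵢ, ξⱼ⟩². -/
/-!
With `Q = ∑ᵢ ξᵢ ⟪ξᵢ, ·⟫` the orthogonal projection onto `E₊(S)`, we have `S = 2Q - 1`.
Expanding `(2Q - 1)P(2Q - 1)P` and using `P² = 1` and cyclicity of the trace gives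
`tr(SPSP) = 4 tr(QPQP) - 4 tr Q + n`, where `tr Q = r` and `tr(QPQP) = ∑ᵢⱼ ⟪Pξᵢ, ξⱼ⟫²`.
-/

open scoped RealInnerProductSpace InnerProductSpace
open Module InnerProductSpace LinearMap

section

variable {𝕜 E ι : Type*} [RCLike 𝕜] [NormedAddCommGroup E] [InnerProductSpace 𝕜 E] [Fintype ι]

theorem Orthonormal.sum_inner_smul_eq_of_mem_span {ξ : ι → E} (hξ : Orthonormal 𝕜 ξ) {w : E}
    (hw : w ∈ Submodule.span 𝕜 (Set.range ξ)) : ∑ i, ⟪ξ i, w⟫_𝕜 • ξ i = w := by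
  obtain ⟨c, rfl⟩ := (Submodule.mem_span_range_iff_exists_fun 𝕜).mp hw
  simp_rw [hξ.inner_right_fintype]

theorem LinearMap.IsSymmetric.eq_two_smul_sum_rankOne_sub_one {S : E →ₗ[𝕜] E}
    (hS : S.IsSymmetric) (hSS : ∀ x, S (S x) = x) {ξ : ι → E} (hξ : Orthonormal 𝕜 ξ)
    (hspan : Submodule.span 𝕜 (Set.range ξ) = Module.End.eigenspace S 1) :
    S = (2 : 𝕜) • ∑ i, (rankOne 𝕜 (ξ i) (ξ i) : E →ₗ[𝕜] E) - 1 := by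
  have hfix (i : ι) : S (ξ i) = ξ i := by
    have hξi : ξ i ∈ Module.End.eigenspace S 1 :=
      hspan ▸ Submodule.subset_span (Set.mem_range_self i)
    simpa using Module.End.mem_eigenspace_iff.mp hξi
  ext x
  have hmem : x + S x ∈ Submodule.span 𝕜 (Set.range ξ) := by
    rw [hspan, Module.End.mem_eigenspace_iff, one_smul, map_add, hSS, add_comm]
  have hcoef (i : ι) : ⟪ξ i, x + S x⟫_𝕜 = 2 * ⟪ξ i, x⟫_𝕜 := by
    rw [inner_add_right, ← hS, hfix, two_mul]
  have hexp := hξ.sum_inner_smul_eq_of_mem_span hmem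
  simp_rw [hcoef, mul_smul, ← Finset.smul_sum] at hexp
  simp [hexp]

theorem trace_comp_rankOne [FiniteDimensional 𝕜 E] (T : E →ₗ[𝕜] E) (x y : E) :
    trace 𝕜 E (T ∘ₗ rankOne 𝕜 x y) = ⟪y, T x⟫_𝕜 := by
  have : T ∘ₗ rankOne 𝕜 x y = (rankOne 𝕜 (T x) y : E →ₗ[𝕜] E) := by ext; simp
  rw [this, trace_rankOne]

theorem trace_sum_rankOne_mul [FiniteDimensional 𝕜 E] (ξ : ι → E) (T : E →ₗ[𝕜] E) :
    trace 𝕜 E ((∑ i, (rankOne 𝕜 (ξ i) (ξ i) : E →ₗ[𝕜] E)) * T) = ∑ i, ⟪ξ i, T (ξ i)⟫_𝕜 := by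
  rw [Finset.sum_mul, map_sum]
  refine Finset.sum_congr rfl fun i _ => ?_
  rw [trace_mul_comm]
  exact trace_comp_rankOne T (ξ i) (ξ i)

end

theorem LinearMap.IsSymmetric.trace_sum_rankOne_mul_mul_sum_rankOne_mul {E ι : Type*}
    [NormedAddCommGroup E] [InnerProductSpace ℝ E] [FiniteDimensional ℝ E] [Fintype ι]
    {P : E →ₗ[ℝ] E} (hP : P.IsSymmetric) (ξ : ι → E) :
    trace ℝ E ((∑ i, (rankOne ℝ (ξ i) (ξ i) : E →ₗ[ℝ] E)) * P *
      (∑ i, (rankOne ℝ (ξ i) (ξ i) : E →ₗ[ℝ] E)) * P) = ∑ i, ∑ j, ⟪P (ξ i), ξ j⟫ ^ 2 := by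
  rw [mul_assoc, mul_assoc, trace_sum_rankOne_mul]
  refine Finset.sum_congr rfl fun i _ => ?_
  simp [← hP (ξ i), inner_sum, inner_smul_right, sq, real_inner_comm]

theorem trace_SPSP_general {V : Type*} [NormedAddCommGroup V]
    [InnerProductSpace ℝ V] [FiniteDimensional ℝ V] (n r : ℕ)
    (hn : finrank ℝ V = n) (S P : V →ₗ[ℝ] V)
    (hSsym : ∀ x y : V, ⟪S x, y⟫ = ⟪x, S y⟫) (hSinv : ∀ x : V, S (S x) = x)
    (hPsym : ∀ x y : V, ⟪P x, y⟫ = ⟪x, P y⟫) (hPinv : ∀ x : V, P (P x) = x)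
    (ξ : Fin r → V) (hortho : Orthonormal ℝ ξ)
    (hspan : Submodule.span ℝ (Set.range ξ) = Module.End.eigenspace S (1 : ℝ)) :
    LinearMap.trace ℝ V (S ∘ₗ P ∘ₗ S ∘ₗ P) =
      (n : ℝ) - 4 * (r : ℝ) + 4 * ∑ i, ∑ j, ⟪P (ξ i), ξ j⟫ ^ 2 := by
  set Q := ∑ i, (rankOne ℝ (ξ i) (ξ i) : V →ₗ[ℝ] V)
  have hS : S = (2 : ℝ) • Q - 1 :=
    LinearMap.IsSymmetric.eq_two_smul_sum_rankOne_sub_one hSsym hSinv hortho hspan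
  have hPP : P * P = 1 := LinearMap.ext hPinv
  have hQ : trace ℝ V Q = r := by
    rw [← mul_one Q, trace_sum_rankOne_mul]
    simp [hortho.1]
  have hPQP : trace ℝ V (P * Q * P) = r := by
    rw [trace_mul_comm, ← mul_assoc, hPP, one_mul, hQ]
  have hexpand : S ∘ₗ P ∘ₗ S ∘ₗ P =
      (4 : ℝ) • (Q * P * Q * P) - (2 : ℝ) • (Q * (P * P)) - (2 : ℝ) • (P * Q * P) + P * P := by
    rw [hS]
    simp only [← Module.End.mul_eq_comp, sub_mul, mul_sub, smul_mul_assoc, mul_smul_comm, one_mul, mul_assoc]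
    module
  have hQPQP : trace ℝ V (Q * P * Q * P) = ∑ i, ∑ j, ⟪P (ξ i), ξ j⟫ ^ 2 :=
    LinearMap.IsSymmetric.trace_sum_rankOne_mul_mul_sum_rankOne_mul (P := P) hPsym ξ
  rw [hexpand, hPP, mul_one]
  simp only [map_add, map_sub, map_smul, hQ, hPQP, hQPQP, trace_one, hn, smul_eq_mul]
  ring

/-- Let `S` and `P` be symmetric involutions of an `n`-dimensional real inner product space `V`,
let `r = dim E₊(S)` with orthonormal basis `{ξ₁,…,ξ_r}`. Then
`tr(SPSP) = n − 4r + 4·Σ_{i,j=1}^{r} ⟨Pξᵢ, ξⱼ⟩²`. -/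
theorem trace_SPSP {V : Type*} [NormedAddCommGroup V]
    [InnerProductSpace ℝ V] [FiniteDimensional ℝ V] (n r : ℕ)
    (hn : finrank ℝ V = n) (S P : V →ₗ[ℝ] V)
    (hSsym : ∀ x y : V, ⟪S x, y⟫ = ⟪x, S y⟫) (hSinv : ∀ x : V, S (S x) = x)
    (hPsym : ∀ x y : V, ⟪P x, y⟫ = ⟪x, P y⟫) (hPinv : ∀ x : V, P (P x) = x)
    (hr : finrank ℝ ↥(Module.End.eigenspace S (1 : ℝ)) = r)
    (ξ : Fin r → V) (hortho : Orthonormal ℝ ξ)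
    (hmem : ∀ i, ξ i ∈ Module.End.eigenspace S (1 : ℝ))
    (hspan : Submodule.span ℝ (Set.range ξ) = Module.End.eigenspace S (1 : ℝ)) :
    LinearMap.trace ℝ V (S ∘ₗ P ∘ₗ S ∘ₗ P) =
      (n : ℝ) - 4 * (r : ℝ) + 4 * ∑ i, ∑ j, ⟪P (ξ i), ξ j⟫ ^ 2 :=
  trace_SPSP_general n r hn S P hSsym hSinv hPsym hPinv ξ hortho hspan
end

section
/- Let S and P be symmetric involutions of an n-dimensional real inner product space, r = dim E₊(S), and define A₋ := n² + (tr S)² − (tr P)² − (tr(SP))² + tr(SPSP) − n + 2n·tr(S) − 2·tr(P)·tr(SP). If {ξ₁,…,ξ_r} is an orthonormal basis of E₊(S), then A₋ = 4( r² − r + Σ_{i≠j} ( ⟨Pξᵢ, ξⱼ⟩² − ⟨Pξᵢ, ξᵢ⟩⟨Pξⱼ, ξⱼ⟩ ) ). -/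
/-!
A self-adjoint involution `S` is the reflection in `E₊(S)`, i.e. `S = 2Π - 1` with `Π` the
orthogonal projection onto `E₊(S)`, and `Π = ∑ᵢ |ξᵢ⟩⟨ξᵢ|`. Substituting `S = 2Π - 1` and using
`P² = 1` and cyclicity of the trace gives
`A₋ = 4 ((tr Π)² - tr Π + tr (ΠPΠP) - (tr (ΠP))²)`, and the three traces are `r`,
`∑ᵢ ⟨Pξᵢ, ξᵢ⟩` and `∑ᵢⱼ ⟨Pξᵢ, ξⱼ⟩²`.
-/

open Module InnerProductSpace
open scoped RealInnerProductSpace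

section Projection

variable {𝕜 E : Type*} [RCLike 𝕜] [NormedAddCommGroup E] [InnerProductSpace 𝕜 E]

theorem Orthonormal.starProjection_eq_sum_rankOne {ι : Type*} [Fintype ι] {ξ : ι → E}
    (hξ : Orthonormal 𝕜 ξ) {K : Submodule 𝕜 E} [K.HasOrthogonalProjection]
    (hspan : Submodule.span 𝕜 (Set.range ξ) = K) :
    K.starProjection = ∑ i, rankOne 𝕜 (ξ i) (ξ i) := by
  classical
  subst hspan
  ext x
  refine Submodule.eq_starProjection_of_mem_of_inner_eq_zero ?_ fun w hw => ?_
  · simp only [FunLike.coe_sum, Finset.sum_apply, rankOne_apply]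
    exact Submodule.sum_mem _ fun i _ => Submodule.smul_mem _ _ (Submodule.subset_span ⟨i, rfl⟩)
  · induction hw using Submodule.span_induction with
    | mem w hw =>
      obtain ⟨j, rfl⟩ := hw
      simp [inner_sub_left, sum_inner, inner_smul_left, orthonormal_iff_ite.mp hξ]
    | zero => simp
    | add => simp_all [inner_add_right]
    | smul => simp_all [inner_smul_right]

theorem LinearMap.IsSymmetric.starProjection_eigenspace_one_apply {S : E →ₗ[𝕜] E}
    (hS : S.IsSymmetric) (hS2 : ∀ x, S (S x) = x) [(End.eigenspace S 1).HasOrthogonalProjection]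
    (x : E) : (End.eigenspace S 1).starProjection x = (2 : 𝕜)⁻¹ • (x + S x) := by
  refine Submodule.eq_starProjection_of_mem_of_inner_eq_zero ?_ fun w hw => ?_
  · simp [hS2, add_comm]
  · have hSw : S w = w := by simpa using End.mem_eigenspace_iff.mp hw
    calc inner 𝕜 (x - (2 : 𝕜)⁻¹ • (x + S x)) w = (2 : 𝕜)⁻¹ * (inner 𝕜 x w - inner 𝕜 (S x) w) := by
          rw [show x - (2 : 𝕜)⁻¹ • (x + S x) = (2 : 𝕜)⁻¹ • (x - S x) by module,
            inner_smul_left, inner_sub_left, map_inv₀, RCLike.conj_ofNat]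
      _ = 0 := by rw [hS, hSw, sub_self, mul_zero]

theorem LinearMap.IsSymmetric.eq_two_smul_starProjection_sub_one {S : E →ₗ[𝕜] E}
    (hS : S.IsSymmetric) (hS2 : ∀ x, S (S x) = x) [(End.eigenspace S 1).HasOrthogonalProjection] :
    S = 2 • ((End.eigenspace S 1).starProjection : End 𝕜 E) - 1 := by
  ext x
  simp only [LinearMap.sub_apply, LinearMap.smul_apply, ContinuousLinearMap.coe_coe,
    hS.starProjection_eigenspace_one_apply hS2, End.one_apply]
  module

theorem InnerProductSpace.trace_rankOne_mul [FiniteDimensional 𝕜 E] (x y : E) (T : End 𝕜 E) :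
    LinearMap.trace 𝕜 E ((rankOne 𝕜 x y : End 𝕜 E) * T) = inner 𝕜 y (T x) := by
  rw [LinearMap.trace_mul_comm, ← trace_rankOne]
  congr 1
  ext z
  simp

theorem Orthonormal.trace_starProjection_mul [FiniteDimensional 𝕜 E] {ι : Type*} [Fintype ι]
    {ξ : ι → E} (hξ : Orthonormal 𝕜 ξ) {K : Submodule 𝕜 E}
    (hspan : Submodule.span 𝕜 (Set.range ξ) = K) (T : End 𝕜 E) :
    LinearMap.trace 𝕜 E ((K.starProjection : End 𝕜 E) * T) = ∑ i, inner 𝕜 (ξ i) (T (ξ i)) := by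
  rw [hξ.starProjection_eq_sum_rankOne hspan, ContinuousLinearMap.toLinearMap_sum, Finset.sum_mul,
    map_sum]
  simp only [trace_rankOne_mul]

end Projection

section Trace

variable {R M : Type*} [CommRing R] [AddCommGroup M] [Module R M] [Module.Free R M]
  [Module.Finite R M]

noncomputable def aMinus (S P : End R M) : R :=
  (finrank R M : R) ^ 2 + (LinearMap.trace R M S) ^ 2 - (LinearMap.trace R M P) ^ 2
    - (LinearMap.trace R M (S ∘ₗ P)) ^ 2 + LinearMap.trace R M (S ∘ₗ P ∘ₗ S ∘ₗ P)
    - (finrank R M : R) + 2 * (finrank R M : R) * LinearMap.trace R M S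
    - 2 * LinearMap.trace R M P * LinearMap.trace R M (S ∘ₗ P)

theorem aMinus_eq_of_eq_two_smul_sub_one {S Q P : End R M} (hS : S = 2 • Q - 1)
    (hP : P * P = 1) :
    aMinus S P = 4 * ((LinearMap.trace R M Q) ^ 2 - LinearMap.trace R M Q
      + LinearMap.trace R M (Q * P * Q * P) - (LinearMap.trace R M (Q * P)) ^ 2) := by
  have hSP : S * P = 2 • (Q * P) - P := by rw [hS]; noncomm_ring
  have hSPSP : S * (P * (S * P)) =
      4 • (Q * P * Q * P) - 2 • (Q * (P * P)) - 2 • (P * Q * P) + P * P := by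
    rw [hS]; noncomm_ring
  have hPQP : LinearMap.trace R M (P * Q * P) = LinearMap.trace R M Q := by
    rw [LinearMap.trace_mul_cycle, hP, one_mul]
  simp only [aMinus, ← End.mul_eq_comp]
  rw [hSPSP, hSP, hS, hP]
  simp only [map_sub, map_add, map_nsmul, hPQP, mul_one, LinearMap.trace_one]
  simp only [nsmul_eq_mul]
  ring

end Trace

theorem Orthonormal.trace_starProjection_mul_mul {V : Type*} [NormedAddCommGroup V]
    [InnerProductSpace ℝ V] [FiniteDimensional ℝ V] {ι : Type*} [Fintype ι] {ξ : ι → V}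
    (hξ : Orthonormal ℝ ξ) {K : Submodule ℝ V} (hspan : Submodule.span ℝ (Set.range ξ) = K)
    {T : End ℝ V} (hT : T.IsSymmetric) :
    LinearMap.trace ℝ V ((K.starProjection : End ℝ V) * T * K.starProjection * T) =
      ∑ i, ∑ j, ⟪T (ξ i), ξ j⟫ ^ 2 := by
  rw [mul_assoc, mul_assoc, hξ.trace_starProjection_mul hspan]
  refine Finset.sum_congr rfl fun i _ => ?_
  rw [End.mul_apply, End.mul_apply, ← hT, hξ.starProjection_eq_sum_rankOne hspan]
  simp only [ContinuousLinearMap.coe_coe, FunLike.coe_sum, Finset.sum_apply, rankOne_apply,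
    inner_sum]
  refine Finset.sum_congr rfl fun j _ => ?_
  rw [inner_smul_right, real_inner_comm (ξ j), sq]

theorem Finset.sum_sum_ite_eq_sub_sq {ι R : Type*} [Fintype ι] [DecidableEq ι] [CommRing R]
    {f : ι → ι → R} {g : ι → R} (hdiag : ∀ i, f i i = g i ^ 2) :
    (∑ i, ∑ j, if i = j then 0 else f i j - g i * g j) = ∑ i, ∑ j, f i j - (∑ i, g i) ^ 2 := by
  rw [sq (∑ i, g i), Finset.sum_mul_sum, ← Finset.sum_sub_distrib]
  refine Finset.sum_congr rfl fun i _ => ?_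
  rw [← Finset.sum_sub_distrib]
  refine Finset.sum_congr rfl fun j _ => ?_
  split_ifs with hij
  · subst hij; rw [hdiag, sq, sub_self]
  · rfl

theorem A_minus_formula_general {V : Type*} [NormedAddCommGroup V]
    [InnerProductSpace ℝ V] [FiniteDimensional ℝ V] (n r : ℕ)
    (hn : finrank ℝ V = n) (S P : V →ₗ[ℝ] V)
    (hSsym : ∀ x y : V, ⟪S x, y⟫ = ⟪x, S y⟫) (hSinv : ∀ x : V, S (S x) = x)
    (hPsym : ∀ x y : V, ⟪P x, y⟫ = ⟪x, P y⟫) (hPinv : ∀ x : V, P (P x) = x)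
    (ξ : Fin r → V) (hortho : Orthonormal ℝ ξ)
    (hspan : Submodule.span ℝ (Set.range ξ) = Module.End.eigenspace S (1 : ℝ)) :
    (n : ℝ) ^ 2 + (LinearMap.trace ℝ V S) ^ 2 - (LinearMap.trace ℝ V P) ^ 2
        - (LinearMap.trace ℝ V (S ∘ₗ P)) ^ 2 + LinearMap.trace ℝ V (S ∘ₗ P ∘ₗ S ∘ₗ P)
        - (n : ℝ) + 2 * (n : ℝ) * LinearMap.trace ℝ V S
        - 2 * LinearMap.trace ℝ V P * LinearMap.trace ℝ V (S ∘ₗ P) =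
      4 * ((r : ℝ) ^ 2 - (r : ℝ) +
        ∑ i, ∑ j, if i = j then 0 else
          ⟪P (ξ i), ξ j⟫ ^ 2 - ⟪P (ξ i), ξ i⟫ * ⟪P (ξ j), ξ j⟫) := by
  subst hn
  refine (aMinus_eq_of_eq_two_smul_sub_one
    (LinearMap.IsSymmetric.eq_two_smul_starProjection_sub_one hSsym hSinv)
    (LinearMap.ext hPinv)).trans ?_
  have htrQ : LinearMap.trace ℝ V (End.eigenspace S 1).starProjection = r := by
    simpa [real_inner_self_eq_norm_sq, hortho.1] using hortho.trace_starProjection_mul hspan 1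
  have htrQP : LinearMap.trace ℝ V ((End.eigenspace S 1).starProjection * P) =
      ∑ i, ⟪P (ξ i), ξ i⟫ := by
    simp [hortho.trace_starProjection_mul hspan, hPsym]
  rw [htrQ, htrQP, hortho.trace_starProjection_mul_mul hspan hPsym,
    Finset.sum_sum_ite_eq_sub_sq fun i => by rw [sq]]
  ring

/-- Let `S` and `P` be symmetric involutions of an `n`-dimensional real inner product space,
`r = dim E₊(S)`, and define
`A₋ := n² + (tr S)² − (tr P)² − (tr(SP))² + tr(SPSP) − n + 2n·tr(S) − 2·tr(P)·tr(SP)`.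
If `{ξ₁,…,ξ_r}` is an orthonormal basis of `E₊(S)`, then
`A₋ = 4( r² − r + Σ_{i≠j} ( ⟨Pξᵢ, ξⱼ⟩² − ⟨Pξᵢ, ξᵢ⟩⟨Pξⱼ, ξⱼ⟩ ) )`. -/
theorem A_minus_formula {V : Type*} [NormedAddCommGroup V]
    [InnerProductSpace ℝ V] [FiniteDimensional ℝ V] (n r : ℕ)
    (hn : finrank ℝ V = n) (S P : V →ₗ[ℝ] V)
    (hSsym : ∀ x y : V, ⟪S x, y⟫ = ⟪x, S y⟫) (hSinv : ∀ x : V, S (S x) = x)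
    (hPsym : ∀ x y : V, ⟪P x, y⟫ = ⟪x, P y⟫) (hPinv : ∀ x : V, P (P x) = x)
    (hr : finrank ℝ ↥(Module.End.eigenspace S (1 : ℝ)) = r)
    (ξ : Fin r → V) (hortho : Orthonormal ℝ ξ)
    (hmem : ∀ i, ξ i ∈ Module.End.eigenspace S (1 : ℝ))
    (hspan : Submodule.span ℝ (Set.range ξ) = Module.End.eigenspace S (1 : ℝ)) :
    (n : ℝ) ^ 2 + (LinearMap.trace ℝ V S) ^ 2 - (LinearMap.trace ℝ V P) ^ 2
        - (LinearMap.trace ℝ V (S ∘ₗ P)) ^ 2 + LinearMap.trace ℝ V (S ∘ₗ P ∘ₗ S ∘ₗ P)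
        - (n : ℝ) + 2 * (n : ℝ) * LinearMap.trace ℝ V S
        - 2 * LinearMap.trace ℝ V P * LinearMap.trace ℝ V (S ∘ₗ P) =
      4 * ((r : ℝ) ^ 2 - (r : ℝ) +
        ∑ i, ∑ j, if i = j then 0 else
          ⟪P (ξ i), ξ j⟫ ^ 2 - ⟪P (ξ i), ξ i⟫ * ⟪P (ξ j), ξ j⟫) :=
  A_minus_formula_general n r hn S P hSsym hSinv hPsym hPinv ξ hortho hspan
end

section
/- Let S and P be symmetric involutions of an n-dimensional real inner product space, and define A₋ := n² + (tr S)² − (tr P)² − (tr(SP))² + tr(SPSP) − n + 2n·tr(S) − 2·tr(P)·tr(SP). Then A₋ ≥ 0. -/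
open scoped RealInnerProductSpace
open Module

private lemma trace_nonneg_of_inner_nonneg {V : Type*} [NormedAddCommGroup V]
    [InnerProductSpace ℝ V] [FiniteDimensional ℝ V] (T : V →ₗ[ℝ] V)
    (h : ∀ x : V, 0 ≤ ⟪T x, x⟫) : 0 ≤ LinearMap.trace ℝ V T := by
  let b := stdOrthonormalBasis ℝ V
  rw [LinearMap.trace_eq_matrix_trace ℝ b.toBasis, Matrix.trace]
  apply Finset.sum_nonneg
  intro i _
  rw [Matrix.diag_apply, LinearMap.toMatrix_apply,
    OrthonormalBasis.coe_toBasis_repr_apply, OrthonormalBasis.repr_apply_apply]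
  rw [real_inner_comm]
  exact h (b i)

/-- Let `S` and `P` be symmetric involutions of an `n`-dimensional real inner product space,
with `S ≠ ±Id`, and define
`A₋ := n² + (tr S)² − (tr P)² − (tr(SP))² + tr(SPSP) − n + 2n·tr(S) − 2·tr(P)·tr(SP)`.
Then `A₋ ≥ 0`. -/
theorem A_minus_nonneg {V : Type*} [NormedAddCommGroup V]
    [InnerProductSpace ℝ V] [FiniteDimensional ℝ V] (n : ℕ)
    (hn : finrank ℝ V = n) (S P : V →ₗ[ℝ] V)
    (hSsym : ∀ x y : V, ⟪S x, y⟫ = ⟪x, S y⟫) (hSinv : ∀ x : V, S (S x) = x)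
    (hPsym : ∀ x y : V, ⟪P x, y⟫ = ⟪x, P y⟫) (hPinv : ∀ x : V, P (P x) = x)
    (hS₁ : S ≠ LinearMap.id) (hS₂ : S ≠ -LinearMap.id) :
    0 ≤ (n : ℝ) ^ 2 + (LinearMap.trace ℝ V S) ^ 2 - (LinearMap.trace ℝ V P) ^ 2
        - (LinearMap.trace ℝ V (S ∘ₗ P)) ^ 2 + LinearMap.trace ℝ V (S ∘ₗ P ∘ₗ S ∘ₗ P)
        - (n : ℝ) + 2 * (n : ℝ) * LinearMap.trace ℝ V S
        - 2 * LinearMap.trace ℝ V P * LinearMap.trace ℝ V (S ∘ₗ P) := by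
  set t := LinearMap.trace ℝ V with ht
  set E : V →ₗ[ℝ] V := (2⁻¹ : ℝ) • (LinearMap.id + S) with hEdef
  set F : V →ₗ[ℝ] V := (2⁻¹ : ℝ) • (LinearMap.id + P) with hFdef
  set M : V →ₗ[ℝ] V := E ∘ₗ F ∘ₗ E with hMdef
  clear_value t E F M
  -- pointwise facts
  have hEx : ∀ x : V, E x = (2⁻¹ : ℝ) • x + (2⁻¹ : ℝ) • S x := by
    intro x; simp [hEdef, smul_add]
  have hFx : ∀ x : V, F x = (2⁻¹ : ℝ) • x + (2⁻¹ : ℝ) • P x := by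
    intro x; simp [hFdef, smul_add]
  have hEE : ∀ x : V, E (E x) = E x := by
    intro x; simp only [hEx, map_add, map_smul, hSinv]; module
  have hFF : ∀ x : V, F (F x) = F x := by
    intro x; simp only [hFx, map_add, map_smul, hPinv]; module
  have hEsym : ∀ x y : V, ⟪E x, y⟫ = ⟪x, E y⟫ := by
    intro x y
    simp only [hEx, inner_add_left, inner_add_right, real_inner_smul_left,
      real_inner_smul_right, hSsym]
  have hFsym : ∀ x y : V, ⟪F x, y⟫ = ⟪x, F y⟫ := by
    intro x y
    simp only [hFx, inner_add_left, inner_add_right, real_inner_smul_left,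
      real_inner_smul_right, hPsym]
  have hMx : ∀ x : V, M x = E (F (E x)) := by intro x; simp [hMdef]
  have hMsym : ∀ x y : V, ⟪M x, y⟫ = ⟪x, M y⟫ := by
    intro x y
    rw [hMx, hMx, hEsym, hFsym, hEsym]
  -- composition facts
  have hSS : S ∘ₗ S = LinearMap.id := LinearMap.ext hSinv
  have hPP : P ∘ₗ P = LinearMap.id := LinearMap.ext hPinv
  have hEEc : E ∘ₗ E = E := LinearMap.ext hEE
  have hME : M ∘ₗ E = M := by
    ext x; simp [hMdef, hEE]
  have hEM : E ∘ₗ M = M := by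
    ext x; simp [hMdef, hEE]
  -- word traces
  have htid : t LinearMap.id = (n : ℝ) := by rw [ht, LinearMap.trace_id, hn]
  have cyc : ∀ X Y : V →ₗ[ℝ] V, t (X ∘ₗ Y) = t (Y ∘ₗ X) := by
    intro X Y
    rw [ht, ← Module.End.mul_eq_comp, ← Module.End.mul_eq_comp, LinearMap.trace_mul_comm]
  have htPS : t (P ∘ₗ S) = t (S ∘ₗ P) := cyc P S
  have htSPS : t (S ∘ₗ (P ∘ₗ S)) = t P := by
    rw [cyc S (P ∘ₗ S), LinearMap.comp_assoc, hSS, LinearMap.comp_id]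
  have htPSP : t (P ∘ₗ (S ∘ₗ P)) = t S := by
    rw [cyc P (S ∘ₗ P), LinearMap.comp_assoc, hPP, LinearMap.comp_id]
  have htPSPS : t (P ∘ₗ (S ∘ₗ (P ∘ₗ S))) = t (S ∘ₗ (P ∘ₗ (S ∘ₗ P))) := by
    have hassoc : (S ∘ₗ (P ∘ₗ S)) ∘ₗ P = S ∘ₗ (P ∘ₗ (S ∘ₗ P)) := by ext x; simp
    rw [cyc P (S ∘ₗ (P ∘ₗ S)), hassoc]
  have htSPSPS : t (S ∘ₗ (P ∘ₗ (S ∘ₗ (P ∘ₗ S)))) = t S := by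
    rw [cyc S (P ∘ₗ (S ∘ₗ (P ∘ₗ S)))]
    have : (P ∘ₗ (S ∘ₗ (P ∘ₗ S))) ∘ₗ S = P ∘ₗ (S ∘ₗ P) := by
      ext x; simp [hSinv]
    rw [this, htPSP]
  -- expansions
  have hMeq : M = (8⁻¹ : ℝ) • (LinearMap.id + LinearMap.id + S + S + P
      + P ∘ₗ S + S ∘ₗ P + S ∘ₗ (P ∘ₗ S)) := by
    ext x
    simp only [hMdef, LinearMap.comp_apply, hEx, hFx, map_add, map_smul, hSinv, hPinv,
      LinearMap.smul_apply, LinearMap.add_apply, LinearMap.id_apply]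
    module
  have hMMeq : M ∘ₗ M = (32⁻¹ : ℝ) • ((6:ℝ) • LinearMap.id + (6:ℝ) • S + (4:ℝ) • P
      + (4:ℝ) • (P ∘ₗ S) + (4:ℝ) • (S ∘ₗ P) + (4:ℝ) • (S ∘ₗ (P ∘ₗ S))
      + P ∘ₗ (S ∘ₗ P) + P ∘ₗ (S ∘ₗ (P ∘ₗ S)) + S ∘ₗ (P ∘ₗ (S ∘ₗ P))
      + S ∘ₗ (P ∘ₗ (S ∘ₗ (P ∘ₗ S)))) := by
    ext x
    simp only [hMdef, LinearMap.comp_apply, hEx, hFx, map_add, map_smul, hSinv, hPinv,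
      LinearMap.smul_apply, LinearMap.add_apply, LinearMap.id_apply]
    module
  -- trace values
  set a := t S with ha'
  set b := t P with hb'
  set c := t (S ∘ₗ P) with hc'
  set e := t E with he'
  set s := t M with hs'
  set m2 := t (M ∘ₗ M) with hm2'
  clear_value a b c e s m2
  have he_val : e = ((n : ℝ) + a) / 2 := by
    rw [he', hEdef, map_smul, map_add, htid, ← ha']; simp only [smul_eq_mul]; ring
  have hs_val : s = ((n : ℝ) + a + b + c) / 4 := by
    rw [hs', hMeq]
    simp only [map_smul, map_add]
    rw [htid, htPS, htSPS, ← ha', ← hb', ← hc']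
    simp only [smul_eq_mul]; ring
  have hd_val : t (S ∘ₗ (P ∘ₗ (S ∘ₗ P))) = 16 * m2 - 3 * n - 4 * a - 4 * b - 4 * c := by
    rw [hm2', hMMeq]
    simp only [map_smul, map_add]
    rw [htid, htPS, htSPS, htPSP, htPSPS, htSPSPS, ← ha', ← hb', ← hc']
    simp only [smul_eq_mul]; ring
  -- inequalities
  have hs_nonneg : 0 ≤ s := by
    rw [hs', ht]
    apply trace_nonneg_of_inner_nonneg
    intro x
    rw [hMx, hEsym, ← hFF (E x), hFsym]
    exact real_inner_self_nonneg
  have hse : 0 ≤ e - s := by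
    have : (0:ℝ) ≤ t (E - M) := by
      rw [ht]
      apply trace_nonneg_of_inner_nonneg
      intro x
      have h1 : (E - M) x = E (E x - F (E x)) := by
        simp only [LinearMap.sub_apply, hMx, map_sub]
        rw [hEE]
      rw [h1, hEsym]
      set y := E x
      have h2 : ⟪F y, F y⟫ = ⟪y, F y⟫ := by
        rw [hFsym y (F y), hFF]
      have h3 : (0:ℝ) ≤ ⟪y - F y, y - F y⟫ := real_inner_self_nonneg
      have h5 : ⟪y, F y⟫ = ⟪F y, y⟫ := real_inner_comm (F y) y
      have h6 : ⟪y - F y, y⟫ = ⟪y, y⟫ - ⟪F y, y⟫ := by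
        rw [inner_sub_left]
      have h7 : ⟪y - F y, y - F y⟫ = ⟪y, y⟫ - ⟪F y, y⟫ - ⟪y, F y⟫ + ⟪F y, F y⟫ := by
        simp only [inner_sub_left, inner_sub_right]; ring
      linarith
    rw [map_sub] at this
    linarith [this]
  -- Cauchy-Schwarz via N = e•M - s•E
  have hcs : 0 ≤ e ^ 2 * m2 - e * s ^ 2 := by
    set N : V →ₗ[ℝ] V := e • M - s • E with hNdef
    clear_value N
    have hNsym : ∀ x y : V, ⟪N x, y⟫ = ⟪x, N y⟫ := by
      intro x y
      simp only [hNdef, LinearMap.sub_apply, LinearMap.smul_apply, inner_sub_left,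
        inner_sub_right, real_inner_smul_left, real_inner_smul_right, hMsym, hEsym]
    have hNN : (0:ℝ) ≤ t (N ∘ₗ N) := by
      rw [ht]
      apply trace_nonneg_of_inner_nonneg
      intro x
      rw [LinearMap.comp_apply, hNsym]
      exact real_inner_self_nonneg
    have hMEx : ∀ x : V, M (E x) = M x := fun x => by rw [hMx, hMx, hEE]
    have hEMx : ∀ x : V, E (M x) = M x := fun x => by
      rw [hMx, hEE, ← hMx]
    have hNNeq : N ∘ₗ N = (e * e) • (M ∘ₗ M) - (e * s) • M - (s * e) • M + (s * s) • E := by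
      ext x
      simp only [hNdef, LinearMap.comp_apply, LinearMap.sub_apply, LinearMap.smul_apply,
        LinearMap.add_apply, map_sub, map_smul, hMEx, hEMx, hEE]
      module
    rw [hNNeq] at hNN
    simp only [map_add, map_sub, map_smul, smul_eq_mul] at hNN
    rw [← hm2', ← hs', ← he'] at hNN
    linarith only [hNN]
  -- e ≥ 1
  have he1 : (1:ℝ) ≤ e := by
    obtain ⟨x, hx⟩ : ∃ x : V, S x ≠ -x := by
      by_contra h
      push_neg at h
      exact hS₂ (LinearMap.ext fun x => by simp [h x])
    set v := x + S x with hv'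
    have hv : v ≠ 0 := by
      intro h
      apply hx
      have : S x = -x := by
        rw [hv'] at h
        linear_combination (norm := module) h
      exact this
    have hEv : E v = v := by
      rw [hEx, hv', map_add, hSinv]
      module
    have hproj : LinearMap.IsProj (LinearMap.range E) E :=
      ⟨fun x => LinearMap.mem_range_self E x,
       fun x hx => by obtain ⟨y, rfl⟩ := hx; exact hEE y⟩
    have htr : e = (finrank ℝ (LinearMap.range E) : ℝ) := by
      rw [he', ht, hproj.trace]
    have hnt : Nontrivial (LinearMap.range E) := by
      refine ⟨⟨⟨v, ⟨v, hEv⟩⟩, 0, ?_⟩⟩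
      intro h
      exact hv (by simpa using congrArg Subtype.val h)
    have hpos : 0 < finrank ℝ (LinearMap.range E) := finrank_pos
    rw [htr]
    exact_mod_cast hpos
  -- combine
  have he0 : (0:ℝ) < e := by linarith
  have hkey : 0 ≤ e * m2 - s ^ 2 := by nlinarith only [hcs, he1, hs_nonneg, sq_nonneg s]
  have hprod : 0 ≤ s * ((e - 1) * (e - s)) :=
    mul_nonneg hs_nonneg (mul_nonneg (by linarith) (by linarith))
  have hcore : 0 ≤ m2 + s * e - s ^ 2 - s := by nlinarith only [hkey, hprod, he0]
  -- final algebra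
  have ha2 : a ^ 2 = (2 * e - n) ^ 2 := by rw [he_val]; ring
  have hna : (n:ℝ) * a = n * (2 * e - n) := by
    have : a = 2 * e - n := by rw [he_val]; ring
    rw [this]
  have hbc2 : (b + c) ^ 2 = (4 * s - 2 * e) ^ 2 := by
    have : b + c = 4 * s - 2 * e := by rw [hs_val, he_val]; ring
    rw [this]
  rw [hd_val]
  have hd2 : (16:ℝ) * m2 - 3 * n - 4 * a - 4 * b - 4 * c
      = 16 * m2 + n - 16 * s := by
    have ha1 : a = 2 * e - n := by rw [he_val]; ring
    have hbc : b + c = 4 * s - 2 * e := by rw [hs_val, he_val]; ring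
    linarith
  nlinarith only [hcore, ha2, hna, hbc2, hd2]
end

section
/- Let S and P be symmetric involutions of an n-dimensional real inner product space with dim E₊(S) = 1. Then A₋ := n² + (tr S)² − (tr P)² − (tr(SP))² + tr(SPSP) − n + 2n·tr(S) − 2·tr(P)·tr(SP) equals 0. -/
open scoped RealInnerProductSpace
open Module

lemma trace_eq_sum_inner' {V : Type*} [NormedAddCommGroup V]
    [InnerProductSpace ℝ V] [FiniteDimensional ℝ V] {ι : Type*} [Fintype ι] [DecidableEq ι]
    (b : OrthonormalBasis ι ℝ V) (f : V →ₗ[ℝ] V) :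
    LinearMap.trace ℝ V f = ∑ i, ⟪b i, f (b i)⟫ := by
  rw [LinearMap.trace_eq_matrix_trace ℝ b.toBasis f, Matrix.trace]
  congr 1
  ext i
  rw [Matrix.diag_apply, LinearMap.toMatrix_apply, OrthonormalBasis.coe_toBasis,
    ← b.repr_apply_apply]
  rfl

/-- Let `S` and `P` be symmetric involutions of an `n`-dimensional real inner product space
with `dim E₊(S) = 1`. Then
`A₋ := n² + (tr S)² − (tr P)² − (tr(SP))² + tr(SPSP) − n + 2n·tr(S) − 2·tr(P)·tr(SP)`
equals `0`. -/
theorem A_minus_eq_zero_of_rank_one {V : Type*} [NormedAddCommGroup V]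
    [InnerProductSpace ℝ V] [FiniteDimensional ℝ V] (n : ℕ)
    (hn : finrank ℝ V = n) (S P : V →ₗ[ℝ] V)
    (hSsym : ∀ x y : V, ⟪S x, y⟫ = ⟪x, S y⟫) (hSinv : ∀ x : V, S (S x) = x)
    (hPsym : ∀ x y : V, ⟪P x, y⟫ = ⟪x, P y⟫) (hPinv : ∀ x : V, P (P x) = x)
    (hr : finrank ℝ ↥(Module.End.eigenspace S (1 : ℝ)) = 1) :
    (n : ℝ) ^ 2 + (LinearMap.trace ℝ V S) ^ 2 - (LinearMap.trace ℝ V P) ^ 2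
        - (LinearMap.trace ℝ V (S ∘ₗ P)) ^ 2 + LinearMap.trace ℝ V (S ∘ₗ P ∘ₗ S ∘ₗ P)
        - (n : ℝ) + 2 * (n : ℝ) * LinearMap.trace ℝ V S
        - 2 * LinearMap.trace ℝ V P * LinearMap.trace ℝ V (S ∘ₗ P) = 0 := by
  subst hn
  -- obtain a unit eigenvector e
  obtain ⟨v, hv0, hvspan⟩ := finrank_eq_one_iff'.mp hr
  have hvV0 : (v : V) ≠ 0 := fun h => hv0 (Subtype.ext h)
  set e : V := ‖(v : V)‖⁻¹ • (v : V) with he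
  have hne : ‖e‖ = 1 := by
    rw [he, norm_smul, norm_inv, norm_norm, inv_mul_cancel₀ (norm_ne_zero_iff.mpr hvV0)]
  have hee : ⟪e, e⟫ = 1 := by
    rw [real_inner_self_eq_norm_sq, hne]; norm_num
  have hSv : S (v : V) = (v : V) := by
    have := v.2
    rw [Module.End.mem_eigenspace_iff] at this
    simpa using this
  have hSe : S e = e := by rw [he, map_smul, hSv]
  -- every vector of the eigenspace is a multiple of e
  have hS : ∀ x : V, S x = (2 * ⟪e, x⟫) • e - x := by
    intro x
    have hw : x + S x ∈ Module.End.eigenspace S (1 : ℝ) := by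
      rw [Module.End.mem_eigenspace_iff, one_smul, map_add, hSinv, add_comm]
    obtain ⟨c, hc⟩ := hvspan ⟨x + S x, hw⟩
    have hc' : x + S x = (c * ‖(v : V)‖) • e := by
      have := congrArg (Subtype.val) hc
      simp only [Submodule.coe_smul] at this
      rw [← this, he, smul_smul, mul_assoc,
        mul_inv_cancel₀ (norm_ne_zero_iff.mpr hvV0), mul_one]
    have h2 : ⟪e, x + S x⟫ = c * ‖(v : V)‖ := by
      rw [hc', inner_smul_right, hee, mul_one]
    have h3 : ⟪e, x + S x⟫ = 2 * ⟪e, x⟫ := by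
      rw [inner_add_right, ← hSe, hSsym, hSe]; ring
    rw [eq_sub_iff_add_eq, ← h3, h2, ← hc']
    abel
  have hPee : ⟪P e, P e⟫ = 1 := by
    rw [hPsym, hPinv, hee]
  clear he
  clear_value e
  set b := stdOrthonormalBasis ℝ V with hb
  set c : ℝ := ⟪e, P e⟫ with hcdef
  have hsum1 : ∑ i, ⟪e, b i⟫ * ⟪b i, e⟫ = 1 := by
    rw [b.sum_inner_mul_inner e e, hee]
  have hsum2 : ∑ i, ⟪e, P (b i)⟫ * ⟪b i, e⟫ = c := by
    have : ∀ i, ⟪e, P (b i)⟫ = ⟪P e, b i⟫ := fun i => (hPsym e (b i)).symm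
    simp_rw [this]
    rw [b.sum_inner_mul_inner (P e) e, real_inner_comm]
  have hsum3 : ∑ i, ⟪e, P (b i)⟫ * ⟪b i, P e⟫ = 1 := by
    have : ∀ i, ⟪e, P (b i)⟫ = ⟪P e, b i⟫ := fun i => (hPsym e (b i)).symm
    simp_rw [this]
    rw [b.sum_inner_mul_inner (P e) (P e), hPee]
  have hsumn : ∑ i : Fin (finrank ℝ V), ⟪b i, b i⟫ = (finrank ℝ V : ℝ) := by
    have : ∀ i : Fin (finrank ℝ V), ⟪b i, b i⟫ = 1 := fun i => by
      rw [real_inner_self_eq_norm_sq, b.orthonormal.1 i]; norm_num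
    simp [this]
  -- trace of S
  have trS : LinearMap.trace ℝ V S = 2 - (finrank ℝ V : ℝ) := by
    rw [trace_eq_sum_inner' b S]
    have : ∀ i, ⟪b i, S (b i)⟫ = 2 * (⟪e, b i⟫ * ⟪b i, e⟫) - ⟪b i, b i⟫ := by
      intro i
      rw [hS, inner_sub_right, inner_smul_right, real_inner_comm e (b i)]
      ring
    simp_rw [this, Finset.sum_sub_distrib, ← Finset.mul_sum]
    rw [hsumn]
    rw [show (∑ i, ⟪e, b i⟫ * ⟪b i, e⟫) = 1 from hsum1]
    ring
  -- trace of S ∘ P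
  have trSP : LinearMap.trace ℝ V (S ∘ₗ P) = 2 * c - LinearMap.trace ℝ V P := by
    rw [trace_eq_sum_inner' b (S ∘ₗ P), trace_eq_sum_inner' b P]
    have : ∀ i, ⟪b i, (S ∘ₗ P) (b i)⟫
        = 2 * (⟪e, P (b i)⟫ * ⟪b i, e⟫) - ⟪b i, P (b i)⟫ := by
      intro i
      rw [LinearMap.comp_apply, hS, inner_sub_right, inner_smul_right,
        real_inner_comm e (b i)]
      ring
    simp_rw [this, Finset.sum_sub_distrib, ← Finset.mul_sum, hsum2]
  -- trace of S ∘ P ∘ S ∘ P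
  have hform : ∀ u : V, (S ∘ₗ P ∘ₗ S ∘ₗ P) u
      = (4 * c * ⟪e, P u⟫ - 2 * ⟪e, u⟫) • e - (2 * ⟪e, P u⟫) • P e + u := by
    intro u
    simp only [LinearMap.comp_apply]
    rw [hS (P u), map_sub, map_smul, hPinv, hS (((2 : ℝ) * ⟪e, P u⟫) • P e - u),
      inner_sub_right, inner_smul_right]
    rw [← hcdef]
    module
  have trSPSP : LinearMap.trace ℝ V (S ∘ₗ P ∘ₗ S ∘ₗ P)
      = 4 * c ^ 2 - 4 + (finrank ℝ V : ℝ) := by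
    rw [trace_eq_sum_inner' b (S ∘ₗ P ∘ₗ S ∘ₗ P)]
    have : ∀ i, ⟪b i, (S ∘ₗ P ∘ₗ S ∘ₗ P) (b i)⟫
        = (4 * c) * (⟪e, P (b i)⟫ * ⟪b i, e⟫) - 2 * (⟪e, b i⟫ * ⟪b i, e⟫)
          - 2 * (⟪e, P (b i)⟫ * ⟪b i, P e⟫) + ⟪b i, b i⟫ := by
      intro i
      rw [hform, inner_add_right, inner_sub_right, inner_smul_right, inner_smul_right,
        real_inner_comm e (b i)]
      ring
    simp_rw [this, Finset.sum_add_distrib, Finset.sum_sub_distrib, ← Finset.mul_sum,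
      hsum1, hsum2, hsum3, hsumn]
    ring
  rw [trS, trSP, trSPSP]
  ring
end

section
/- Let (M,g) be a Riemannian manifold with Levi-Civita connection ∇, θ a 1-form, and S a g-orthogonal involution of TM satisfying ∇_X S = SX⊙θ♯ − Sθ♯⊙X for all X, where (X⊙Y)(Z) = ⟨X,Z⟩Y + ⟨Y,Z⟩X. If P is a ∇-parallel g-orthogonal involution of TM and α := SP − PS, then for every vector field X: ∇_X α = PSX∧θ + Pθ∧SX − PX∧Sθ − PSθ∧X, where (U∧V)(Z) := ⟨U,Z⟩V − ⟨V,Z⟩U and θ is identified with θ♯. -/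
/-!
Because `P` is parallel, `∇_X (SP - PS) = (∇_X S) P - P (∇_X S)`. Substituting the given formula
for `∇_X S` and moving `P` across `g` by self-adjointness yields the four wedge terms.
-/

namespace Connection

variable {R M : Type*} [Semiring R] [AddCommGroup M] [Module R M]

def covDerivEnd (conn : M → M → M) (A : Module.End R M) (X Y : M) : M :=
  conn X (A Y) - A (conn X Y)

theorem covDerivEnd_mul (conn : M → M → M) (A B : Module.End R M) (X Y : M) :
    covDerivEnd conn (A * B) X Y = covDerivEnd conn A X (B Y) + A (covDerivEnd conn B X Y) := by
  simp only [covDerivEnd, Module.End.mul_apply, map_sub]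
  abel

theorem covDerivEnd_sub (conn : M → M → M)
    (conn_add : ∀ X Y Z : M, conn X (Y + Z) = conn X Y + conn X Z)
    (A B : Module.End R M) (X Y : M) :
    covDerivEnd conn (A - B) X Y = covDerivEnd conn A X Y - covDerivEnd conn B X Y := by
  have conn_sub : conn X (A Y - B Y) = conn X (A Y) - conn X (B Y) :=
    map_sub (AddMonoidHom.mk' (conn X) (conn_add X)) _ _
  simp only [covDerivEnd, LinearMap.sub_apply, conn_sub]
  abel

theorem covDerivEnd_eq_zero_of_parallel (conn : M → M → M) (P : Module.End R M)
    (hP : ∀ X Y : M, conn X (P Y) = P (conn X Y)) (X Y : M) :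
    covDerivEnd conn P X Y = 0 := by
  rw [covDerivEnd, hP, sub_self]

theorem covDerivEnd_commutator_of_parallel (conn : M → M → M)
    (conn_add : ∀ X Y Z : M, conn X (Y + Z) = conn X Y + conn X Z)
    (A P : Module.End R M) (hP : ∀ X Y : M, conn X (P Y) = P (conn X Y)) (X Y : M) :
    covDerivEnd conn (A * P - P * A) X Y =
      covDerivEnd conn A X (P Y) - P (covDerivEnd conn A X Y) := by
  rw [covDerivEnd_sub conn conn_add, covDerivEnd_mul, covDerivEnd_mul,
    covDerivEnd_eq_zero_of_parallel conn P hP, covDerivEnd_eq_zero_of_parallel conn P hP,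
    map_zero, add_zero, zero_add]

end Connection

open Connection

/-- `C` stands for the ring of smooth functions, `VF` for the module of vector fields,
`conn X Y` for `∇_X Y` and `θs` for `θ♯`. -/
theorem nabla_alpha_formula_general {C VF : Type*} [CommRing C]
    [AddCommGroup VF] [Module C VF]
    (g : VF →ₗ[C] VF →ₗ[C] C) (conn : VF → VF → VF)
    (conn_addY : ∀ X Y Z : VF, conn X (Y + Z) = conn X Y + conn X Z)
    (θs : VF) (S P : VF →ₗ[C] VF)
    (hPsym : ∀ X Y : VF, g (P X) Y = g X (P Y))
    (hPpar : ∀ X Y : VF, conn X (P Y) = P (conn X Y))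
    (hSder : ∀ X Y : VF, conn X (S Y) - S (conn X Y) =
      g (S X) Y • θs + g θs Y • S X - g (S θs) Y • X - g X Y • S θs) :
    ∀ X Y : VF,
      conn X (S (P Y) - P (S Y)) - (S (P (conn X Y)) - P (S (conn X Y))) =
        (g (P (S X)) Y • θs - g θs Y • P (S X))
        + (g (P θs) Y • S X - g (S X) Y • P θs)
        - (g (P X) Y • S θs - g (S θs) Y • P X)
        - (g (P (S θs)) Y • X - g X Y • P (S θs)) := by
  intro X Y
  have hS : ∀ X Y : VF, covDerivEnd conn S X Y =
      g (S X) Y • θs + g θs Y • S X - g (S θs) Y • X - g X Y • S θs := hSder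
  change covDerivEnd conn (S * P - P * S) X Y = _
  rw [covDerivEnd_commutator_of_parallel conn conn_addY S P hPpar, hS, hS]
  simp only [map_add, map_sub, map_smul, ← hPsym]
  abel

/-- Let `(M,g)` be a Riemannian manifold with Levi-Civita connection `∇`, `θ` a 1-form, and
`S` a `g`-orthogonal involution of `TM` satisfying `∇_X S = SX⊙θ♯ − Sθ♯⊙X` for all `X`,
where `(X⊙Y)(Z) = ⟨X,Z⟩Y + ⟨Y,Z⟩X`. If `P` is a `∇`-parallel `g`-orthogonal involution of
`TM` and `α := SP − PS`, then for every vector field `X`: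
`∇_X α = PSX∧θ + Pθ∧SX − PX∧Sθ − PSθ∧X`, where `(U∧V)(Z) := ⟨U,Z⟩V − ⟨V,Z⟩U` and
`θ` is identified with `θ♯`.

We model the geometry algebraically: `C` is the commutative ℝ-algebra of smooth functions,
`VF` the `C`-module of vector fields, `act` the derivation action, `g` the metric, `conn`
the Levi-Civita connection, and `θs = θ♯`; `(∇_X α)(Y) = ∇_X(α Y) − α(∇_X Y)`. -/
theorem nabla_alpha_formula {C VF : Type*} [CommRing C] [Algebra ℝ C]
    [AddCommGroup VF] [Module C VF]
    (act : VF → C → C) (bracket : VF → VF → VF)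
    (g : VF →ₗ[C] VF →ₗ[C] C) (conn : VF → VF → VF)
    (gsymm : ∀ X Y : VF, g X Y = g Y X)
    (conn_addY : ∀ X Y Z : VF, conn X (Y + Z) = conn X Y + conn X Z)
    (conn_smulY : ∀ (X : VF) (f : C) (Y : VF), conn X (f • Y) = act X f • Y + f • conn X Y)
    (torsion_free : ∀ X Y : VF, conn X Y - conn Y X = bracket X Y)
    (conn_metric : ∀ X Y Z : VF, act X (g Y Z) = g (conn X Y) Z + g Y (conn X Z))
    (θs : VF) (S P : VF →ₗ[C] VF)
    (hSsym : ∀ X Y : VF, g (S X) Y = g X (S Y)) (hSinv : ∀ X : VF, S (S X) = X)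
    (hPsym : ∀ X Y : VF, g (P X) Y = g X (P Y)) (hPinv : ∀ X : VF, P (P X) = X)
    (hPpar : ∀ X Y : VF, conn X (P Y) = P (conn X Y))
    (hSder : ∀ X Y : VF, conn X (S Y) - S (conn X Y) =
      g (S X) Y • θs + g θs Y • S X - g (S θs) Y • X - g X Y • S θs) :
    ∀ X Y : VF,
      conn X (S (P Y) - P (S Y)) - (S (P (conn X Y)) - P (S (conn X Y))) =
        (g (P (S X)) Y • θs - g θs Y • P (S X))
        + (g (P θs) Y • S X - g (S X) Y • P θs)
        - (g (P X) Y • S θs - g (S θs) Y • P X)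
        - (g (P (S θs)) Y • X - g X Y • P (S θs)) :=
  nabla_alpha_formula_general g conn conn_addY θs S P hPsym hPpar hSder
end

section
/- In the setting of a conformal product structure on a reducible Riemannian manifold (S, P, θ as above with ∇P = 0 and ∇_X S = SX⊙θ♯ − Sθ♯⊙X), the function tr(SP) satisfies d(tr(SP)) = 2α(θ), where α = SP − PS is viewed as a skew-symmetric endomorphism acting on θ♯. -/
/-!
Differentiation along `X` commutes with the trace over an orthonormal frame,
`X(tr T) = tr(∇_X T)`, because the connection coefficients `g(∇_X eᵢ, eⱼ)` are skew in `i, j`.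
For `T = SP` with `P` parallel, `∇_X(SP) = (∇_X S) P`, and the trace of `Y ↦ g(u, PY) v` is
`g(Pu, v)`; the four rank-one terms of `∇_X S` then add up to `2 g(SPθ♯ - PSθ♯, X)`.
-/

open Finset

section FrameTrace

variable {C VF : Type*} [CommRing C] [AddCommGroup VF] [Module C VF]
  {g : VF →ₗ[C] VF →ₗ[C] C} {ι : Type*} {e : ι → VF}

theorem inner_nabla_frame_skew [DecidableEq ι] {D : C → C} {nabla : VF → VF}
    (gsymm : ∀ X Y : VF, g X Y = g Y X)
    (D_add : ∀ f h : C, D (f + h) = D f + D h) (D_one : D 1 = 0)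
    (nabla_metric : ∀ Y Z : VF, D (g Y Z) = g (nabla Y) Z + g Y (nabla Z))
    (horth : ∀ i j, g (e i) (e j) = if i = j then 1 else 0) (i j : ι) :
    g (nabla (e i)) (e j) = -g (nabla (e j)) (e i) := by
  have D_zero : D 0 = 0 := by simpa using D_add 0 0
  have h := nabla_metric (e i) (e j)
  rw [horth, gsymm (e i)] at h
  split_ifs at h
  · linear_combination -h + D_one
  · linear_combination -h + D_zero

variable (g e) [Fintype ι]

def frameTrace (T : VF → VF) : C := ∑ i, g (T (e i)) (e i)

variable {g e}

theorem frameTrace_add (F G : VF → VF) :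
    frameTrace g e (fun Y => F Y + G Y) = frameTrace g e F + frameTrace g e G := by
  simp [frameTrace, sum_add_distrib]

theorem frameTrace_sub (F G : VF → VF) :
    frameTrace g e (fun Y => F Y - G Y) = frameTrace g e F - frameTrace g e G := by
  simp [frameTrace, sum_sub_distrib]

section Expansion

variable (hexp : ∀ X : VF, X = ∑ i, g X (e i) • e i)
include hexp

theorem inner_eq_sum_frame (Y Z : VF) : g Y Z = ∑ i, g Z (e i) * g Y (e i) := by
  conv_lhs => rw [hexp Z]
  simp [smul_eq_mul]

theorem frameTrace_rankOne (u v : VF) : frameTrace g e (fun Y => g u Y • v) = g v u := by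
  simp only [frameTrace, map_smul, LinearMap.smul_apply, smul_eq_mul]
  exact (inner_eq_sum_frame hexp v u).symm

theorem map_frameTrace_eq_frameTrace_covDeriv [DecidableEq ι] {D : C → C} {nabla : VF → VF}
    (gsymm : ∀ X Y : VF, g X Y = g Y X)
    (D_add : ∀ f h : C, D (f + h) = D f + D h) (D_one : D 1 = 0)
    (nabla_metric : ∀ Y Z : VF, D (g Y Z) = g (nabla Y) Z + g Y (nabla Z))
    (horth : ∀ i j, g (e i) (e j) = if i = j then 1 else 0) (T : VF →ₗ[C] VF) :
    D (frameTrace g e T) = frameTrace g e (fun Y => nabla (T Y) - T (nabla Y)) := by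
  let Γ i j := g (nabla (e i)) (e j)
  have skew : ∀ i j, Γ i j = -Γ j i :=
    inner_nabla_frame_skew gsymm D_add D_one nabla_metric horth
  have T_nabla : ∀ i, g (T (nabla (e i))) (e i) = ∑ j, Γ i j * g (T (e j)) (e i) := by
    intro i
    conv_lhs => rw [hexp (nabla (e i))]
    simp [Γ, smul_eq_mul]
  have nabla_T : ∀ i, g (T (e i)) (nabla (e i)) = ∑ j, Γ i j * g (T (e i)) (e j) := by
    intro i
    rw [gsymm, inner_eq_sum_frame hexp (nabla (e i)) (T (e i))]
    exact sum_congr rfl fun j _ => mul_comm _ _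
  have cancel : ∑ i, (g (T (nabla (e i))) (e i) + g (T (e i)) (nabla (e i))) = 0 := by
    simp only [T_nabla, nabla_T, sum_add_distrib]
    rw [add_eq_zero_iff_eq_neg, sum_comm, ← sum_neg_distrib]
    refine sum_congr rfl fun j _ => ?_
    rw [← sum_neg_distrib]
    refine sum_congr rfl fun i _ => ?_
    rw [skew]
    ring
  have D_sum : D (frameTrace g e T) = ∑ i, D (g (T (e i)) (e i)) :=
    map_sum (AddMonoidHom.mk' D D_add) _ _
  rw [D_sum, frameTrace, ← sub_eq_zero, ← sum_sub_distrib, ← cancel]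
  refine sum_congr rfl fun i _ => ?_
  rw [nabla_metric, map_sub, LinearMap.sub_apply]
  ring

end Expansion

end FrameTrace

/-- `C` models the smooth functions, `VF` the vector fields, `act X f = df(X)`, `conn` the
Levi-Civita connection, `θs = θ♯`, and `e` a (local) orthonormal frame, so that
`tr F = Σᵢ g(F eᵢ, eᵢ)`. -/
theorem d_trace_SP_general {C VF : Type*} [CommRing C] [Algebra ℝ C]
    [AddCommGroup VF] [Module C VF]
    (act : VF → C → C)
    (g : VF →ₗ[C] VF →ₗ[C] C) (conn : VF → VF → VF)
    (gsymm : ∀ X Y : VF, g X Y = g Y X)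
    (act_add : ∀ (X : VF) (f h : C), act X (f + h) = act X f + act X h)
    (act_const : ∀ (X : VF) (c : ℝ), act X (algebraMap ℝ C c) = 0)
    (conn_metric : ∀ X Y Z : VF, act X (g Y Z) = g (conn X Y) Z + g Y (conn X Z))
    (θs : VF) (S P : VF →ₗ[C] VF)
    (hSsym : ∀ X Y : VF, g (S X) Y = g X (S Y))
    (hPsym : ∀ X Y : VF, g (P X) Y = g X (P Y))
    (hPpar : ∀ X Y : VF, conn X (P Y) = P (conn X Y))
    (hSder : ∀ X Y : VF, conn X (S Y) - S (conn X Y) =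
      g (S X) Y • θs + g θs Y • S X - g (S θs) Y • X - g X Y • S θs)
    {ι : Type*} [Fintype ι] [DecidableEq ι] (e : ι → VF)
    (horth : ∀ i j, g (e i) (e j) = if i = j then 1 else 0)
    (hexp : ∀ X : VF, X = ∑ i, g X (e i) • e i) :
    ∀ X : VF, act X (∑ i, g (S (P (e i))) (e i)) =
      2 * g (S (P θs) - P (S θs)) X := by
  intro X
  have act_one : act X 1 = 0 := by simpa using act_const X 1
  have covDeriv_SP : ∀ Y, conn X (S (P Y)) - S (P (conn X Y)) =
      g (P (S X)) Y • θs + g (P θs) Y • S X - g (P (S θs)) Y • X - g (P X) Y • S θs := by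
    intro Y
    rw [← hPpar, hSder]
    simp only [hPsym]
  calc act X (∑ i, g (S (P (e i))) (e i))
      = frameTrace g e (fun Y => conn X (S (P Y)) - S (P (conn X Y))) :=
        map_frameTrace_eq_frameTrace_covDeriv hexp gsymm (act_add X) act_one (conn_metric X)
          horth (S ∘ₗ P)
    _ = g θs (P (S X)) + g (S X) (P θs) - g X (P (S θs)) - g (S θs) (P X) := by
        simp only [covDeriv_SP, frameTrace_add, frameTrace_sub, frameTrace_rankOne hexp]
    _ = 2 * g (S (P θs) - P (S θs)) X := by
        rw [← hPsym θs, ← hSsym (P θs), hSsym X, gsymm X, gsymm X, ← hPsym (S θs), map_sub,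
          LinearMap.sub_apply]
        ring

/-- In the setting of a conformal product structure on a reducible Riemannian manifold
(`S`, `P`, `θ` with `∇P = 0` and `∇_X S = SX⊙θ♯ − Sθ♯⊙X`), the function `tr(SP)` satisfies
`d(tr(SP)) = 2α(θ)`, where `α = SP − PS` is viewed as a skew-symmetric endomorphism acting
on `θ♯`.

We model the geometry algebraically: `C` is the commutative ℝ-algebra of smooth functions,
`VF` the `C`-module of vector fields, `act` the derivation action (so `d f (X) = act X f`),
`g` the metric, `conn` the Levi-Civita connection, `θs = θ♯`, and `e : ι → VF` a (local)
orthonormal frame, so that `tr(F) = Σᵢ g(F eᵢ, eᵢ)` and 1-forms are identified with vector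
fields via `g`. -/
theorem d_trace_SP {C VF : Type*} [CommRing C] [Algebra ℝ C]
    [AddCommGroup VF] [Module C VF]
    (act : VF → C → C) (bracket : VF → VF → VF)
    (g : VF →ₗ[C] VF →ₗ[C] C) (conn : VF → VF → VF)
    (gsymm : ∀ X Y : VF, g X Y = g Y X)
    (act_add : ∀ (X : VF) (f h : C), act X (f + h) = act X f + act X h)
    (act_mul : ∀ (X : VF) (f h : C), act X (f * h) = f * act X h + h * act X f)
    (act_const : ∀ (X : VF) (c : ℝ), act X (algebraMap ℝ C c) = 0)
    (conn_addY : ∀ X Y Z : VF, conn X (Y + Z) = conn X Y + conn X Z)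
    (conn_smulY : ∀ (X : VF) (f : C) (Y : VF), conn X (f • Y) = act X f • Y + f • conn X Y)
    (torsion_free : ∀ X Y : VF, conn X Y - conn Y X = bracket X Y)
    (conn_metric : ∀ X Y Z : VF, act X (g Y Z) = g (conn X Y) Z + g Y (conn X Z))
    (θs : VF) (S P : VF →ₗ[C] VF)
    (hSsym : ∀ X Y : VF, g (S X) Y = g X (S Y)) (hSinv : ∀ X : VF, S (S X) = X)
    (hPsym : ∀ X Y : VF, g (P X) Y = g X (P Y)) (hPinv : ∀ X : VF, P (P X) = X)
    (hPpar : ∀ X Y : VF, conn X (P Y) = P (conn X Y))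
    (hSder : ∀ X Y : VF, conn X (S Y) - S (conn X Y) =
      g (S X) Y • θs + g θs Y • S X - g (S θs) Y • X - g X Y • S θs)
    {ι : Type*} [Fintype ι] [DecidableEq ι] (e : ι → VF)
    (horth : ∀ i j, g (e i) (e j) = if i = j then 1 else 0)
    (hexp : ∀ X : VF, X = ∑ i, g X (e i) • e i) :
    ∀ X : VF, act X (∑ i, g (S (P (e i))) (e i)) =
      2 * g (S (P θs) - P (S θs)) X :=
  d_trace_SP_general act g conn gsymm act_add act_const conn_metric θs S P hSsym hPsym hPpar hSder e
    horth hexp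
end

section
/- In the setting of a conformal product structure on a reducible Riemannian manifold with α = SP − PS, the codifferential of the 2-form α satisfies δα = (1−n)PSθ − SPθ − tr(PS)θ + tr(P)Sθ + tr(S)Pθ, identifying 1-forms and vector fields via g. -/
open Finset

/-- In the setting of a conformal product structure on a reducible Riemannian manifold with
`α = SP − PS`, the codifferential of the 2-form `α` satisfies
`δα = (1−n)PSθ − SPθ − tr(PS)θ + tr(P)Sθ + tr(S)Pθ`, identifying 1-forms and vector fields
via `g`.

We model the geometry algebraically: `C` is the commutative ℝ-algebra of smooth functions,
`VF` the `C`-module of vector fields, `act` the derivation action, `g` the metric, `conn`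
the Levi-Civita connection, `θs = θ♯`, and `e : ι → VF` an orthonormal frame with
`n = card ι = dim M`; `tr(F) = Σᵢ g(F eᵢ, eᵢ)` and
`δα = −Σᵢ (∇_{eᵢ}α)(eᵢ)` with `(∇_X α)(Y) = ∇_X(α Y) − α(∇_X Y)`. -/
theorem codifferential_alpha {C VF : Type*} [CommRing C] [Algebra ℝ C]
    [AddCommGroup VF] [Module C VF]
    (act : VF → C → C) (bracket : VF → VF → VF)
    (g : VF →ₗ[C] VF →ₗ[C] C) (conn : VF → VF → VF)
    (gsymm : ∀ X Y : VF, g X Y = g Y X)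
    (act_add : ∀ (X : VF) (f h : C), act X (f + h) = act X f + act X h)
    (act_mul : ∀ (X : VF) (f h : C), act X (f * h) = f * act X h + h * act X f)
    (act_const : ∀ (X : VF) (c : ℝ), act X (algebraMap ℝ C c) = 0)
    (conn_addY : ∀ X Y Z : VF, conn X (Y + Z) = conn X Y + conn X Z)
    (conn_smulY : ∀ (X : VF) (f : C) (Y : VF), conn X (f • Y) = act X f • Y + f • conn X Y)
    (torsion_free : ∀ X Y : VF, conn X Y - conn Y X = bracket X Y)
    (conn_metric : ∀ X Y Z : VF, act X (g Y Z) = g (conn X Y) Z + g Y (conn X Z))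
    (θs : VF) (S P : VF →ₗ[C] VF)
    (hSsym : ∀ X Y : VF, g (S X) Y = g X (S Y)) (hSinv : ∀ X : VF, S (S X) = X)
    (hPsym : ∀ X Y : VF, g (P X) Y = g X (P Y)) (hPinv : ∀ X : VF, P (P X) = X)
    (hPpar : ∀ X Y : VF, conn X (P Y) = P (conn X Y))
    (hSder : ∀ X Y : VF, conn X (S Y) - S (conn X Y) =
      g (S X) Y • θs + g θs Y • S X - g (S θs) Y • X - g X Y • S θs)
    {ι : Type*} [Fintype ι] [DecidableEq ι] (e : ι → VF)
    (horth : ∀ i j, g (e i) (e j) = if i = j then 1 else 0)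
    (hexp : ∀ X : VF, X = ∑ i, g X (e i) • e i) :
    -∑ i, (conn (e i) (S (P (e i)) - P (S (e i)))
        - (S (P (conn (e i) (e i))) - P (S (conn (e i) (e i))))) =
      algebraMap ℝ C (1 - (Fintype.card ι : ℝ)) • P (S θs) - S (P θs)
        - (∑ i, g (P (S (e i))) (e i)) • θs
        + (∑ i, g (P (e i)) (e i)) • S θs
        + (∑ i, g (S (e i)) (e i)) • P θs := by
  classical
  have hsub : ∀ X Y Z : VF, conn X (Y - Z) = conn X Y - conn X Z := by
    intro X Y Z
    have h := conn_addY X (Y - Z) Z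
    rw [sub_add_cancel] at h
    exact eq_sub_of_add_eq h.symm
  have key : ∀ i, conn (e i) (S (P (e i)) - P (S (e i)))
        - (S (P (conn (e i) (e i))) - P (S (conn (e i) (e i))))
      = (g (S (e i)) (P (e i)) • θs + g θs (P (e i)) • S (e i)
          - g (S θs) (P (e i)) • e i - g (e i) (P (e i)) • S θs)
        - (g (S (e i)) (e i) • P θs + g θs (e i) • P (S (e i))
          - g (S θs) (e i) • P (e i) - g (e i) (e i) • P (S θs)) := by
    intro i
    have h1 := hSder (e i) (P (e i))
    have h2 : P (conn (e i) (S (e i))) - P (S (conn (e i) (e i)))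
        = g (S (e i)) (e i) • P θs + g θs (e i) • P (S (e i))
          - g (S θs) (e i) • P (e i) - g (e i) (e i) • P (S θs) := by
      rw [← map_sub, hSder (e i) (e i)]
      simp [map_add, map_sub, map_smul]
    have hp := hPpar (e i) (e i)
    have hp2 := hPpar (e i) (S (e i))
    rw [hsub, hp2, ← h2, ← h1, hp]
    abel
  have e1 : ∑ i, g (S (e i)) (P (e i)) • θs = (∑ i, g (P (S (e i))) (e i)) • θs := by
    rw [Finset.sum_smul]
    exact Finset.sum_congr rfl fun i _ => by rw [hPsym]
  have e2 : ∑ i, g θs (P (e i)) • S (e i) = S (P θs) := by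
    calc ∑ i, g θs (P (e i)) • S (e i) = ∑ i, g (P θs) (e i) • S (e i) :=
          Finset.sum_congr rfl fun i _ => by rw [hPsym]
      _ = S (∑ i, g (P θs) (e i) • e i) := by
          rw [map_sum]; exact Finset.sum_congr rfl fun i _ => (map_smul S _ _).symm
      _ = S (P θs) := by rw [← hexp (P θs)]
  have e3 : ∑ i, g (S θs) (P (e i)) • e i = P (S θs) := by
    calc ∑ i, g (S θs) (P (e i)) • e i = ∑ i, g (P (S θs)) (e i) • e i :=
          Finset.sum_congr rfl fun i _ => by rw [hPsym]
      _ = P (S θs) := (hexp (P (S θs))).symm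
  have e4 : ∑ i, g (e i) (P (e i)) • S θs = (∑ i, g (P (e i)) (e i)) • S θs := by
    rw [Finset.sum_smul]
    exact Finset.sum_congr rfl fun i _ => by rw [gsymm]
  have e5 : ∑ i, g (S (e i)) (e i) • P θs = (∑ i, g (S (e i)) (e i)) • P θs := by
    rw [Finset.sum_smul]
  have e6 : ∑ i, g θs (e i) • P (S (e i)) = P (S θs) := by
    calc ∑ i, g θs (e i) • P (S (e i)) = P (S (∑ i, g θs (e i) • e i)) := by
          rw [map_sum, map_sum]
          exact Finset.sum_congr rfl fun i _ => by rw [map_smul, map_smul]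
      _ = P (S θs) := by rw [← hexp θs]
  have e7 : ∑ i, g (S θs) (e i) • P (e i) = P (S θs) := by
    calc ∑ i, g (S θs) (e i) • P (e i) = P (∑ i, g (S θs) (e i) • e i) := by
          rw [map_sum]
          exact Finset.sum_congr rfl fun i _ => (map_smul P _ _).symm
      _ = P (S θs) := by rw [← hexp (S θs)]
  have e8 : ∑ i, g (e i) (e i) • P (S θs) = (Fintype.card ι) • P (S θs) := by
    have h1 : ∀ i, g (e i) (e i) = 1 := fun i => by rw [horth, if_pos rfl]
    calc ∑ i, g (e i) (e i) • P (S θs) = ∑ _i : ι, P (S θs) :=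
          Finset.sum_congr rfl fun i _ => by rw [h1, one_smul]
      _ = (Fintype.card ι) • P (S θs) := by rw [Finset.sum_const, Finset.card_univ]
  have hcast : algebraMap ℝ C (1 - (Fintype.card ι : ℝ)) • P (S θs)
      = P (S θs) - (Fintype.card ι) • P (S θs) := by
    rw [map_sub, map_one, map_natCast, sub_smul, one_smul, Nat.cast_smul_eq_nsmul]
  rw [Finset.sum_congr rfl fun i _ => key i]
  rw [Finset.sum_sub_distrib, Finset.sum_sub_distrib, Finset.sum_sub_distrib,
    Finset.sum_add_distrib, Finset.sum_sub_distrib, Finset.sum_sub_distrib,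
    Finset.sum_add_distrib]
  rw [e1, e2, e3, e4, e5, e6, e7, e8, hcast]
  abel
end

section
/- Let (M,g) be a Riemannian manifold, θ a 1-form with T := ∇θ, and S a self-adjoint involution of TM satisfying ∇_X S = SX⊙θ♯ − Sθ♯⊙X. Then tr(S∘T) = −δ(Sθ) − ‖θ‖²·tr(S) + n·⟨θ, Sθ⟩, where n = dim M, δ is the codifferential, and S acts on 1-forms via the metric identification. -/
open Finset

/-- Let `(M,g)` be a Riemannian manifold, `θ` a 1-form with `T := ∇θ`, and `S` a self-adjoint
involution of `TM` satisfying `∇_X S = SX⊙θ♯ − Sθ♯⊙X`. Then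
`tr(S∘T) = −δ(Sθ) − ‖θ‖²·tr(S) + n·⟨θ, Sθ⟩`, where `n = dim M`, `δ` is the codifferential,
and `S` acts on 1-forms via the metric identification.

We model the geometry algebraically: `C` is the commutative ℝ-algebra of smooth functions,
`VF` the `C`-module of vector fields, `act` the derivation action, `g` the metric, `conn`
the Levi-Civita connection, `θs = θ♯`, and `e : ι → VF` an orthonormal frame with
`n = card ι`; via the metric identification `T X = ∇_X θ♯`, so
`tr(S∘T) = Σᵢ g(S(∇_{eᵢ}θ♯), eᵢ)`, `δ(Sθ) = −Σᵢ g(∇_{eᵢ}(Sθ♯), eᵢ)`, `‖θ‖² = g(θ♯,θ♯)`,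
`tr S = Σᵢ g(S eᵢ, eᵢ)` and `⟨θ, Sθ⟩ = g(θ♯, Sθ♯)`. -/
theorem trace_S_T {C VF : Type*} [CommRing C] [Algebra ℝ C]
    [AddCommGroup VF] [Module C VF]
    (act : VF → C → C) (bracket : VF → VF → VF)
    (g : VF →ₗ[C] VF →ₗ[C] C) (conn : VF → VF → VF)
    (gsymm : ∀ X Y : VF, g X Y = g Y X)
    (act_add : ∀ (X : VF) (f h : C), act X (f + h) = act X f + act X h)
    (act_mul : ∀ (X : VF) (f h : C), act X (f * h) = f * act X h + h * act X f)
    (act_const : ∀ (X : VF) (c : ℝ), act X (algebraMap ℝ C c) = 0)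
    (conn_addY : ∀ X Y Z : VF, conn X (Y + Z) = conn X Y + conn X Z)
    (conn_smulY : ∀ (X : VF) (f : C) (Y : VF), conn X (f • Y) = act X f • Y + f • conn X Y)
    (torsion_free : ∀ X Y : VF, conn X Y - conn Y X = bracket X Y)
    (conn_metric : ∀ X Y Z : VF, act X (g Y Z) = g (conn X Y) Z + g Y (conn X Z))
    (θs : VF) (S : VF →ₗ[C] VF)
    (hSsym : ∀ X Y : VF, g (S X) Y = g X (S Y)) (hSinv : ∀ X : VF, S (S X) = X)
    (hSder : ∀ X Y : VF, conn X (S Y) - S (conn X Y) =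
      g (S X) Y • θs + g θs Y • S X - g (S θs) Y • X - g X Y • S θs)
    {ι : Type*} [Fintype ι] [DecidableEq ι] (e : ι → VF)
    (horth : ∀ i j, g (e i) (e j) = if i = j then 1 else 0)
    (hexp : ∀ X : VF, X = ∑ i, g X (e i) • e i) :
    ∑ i, g (S (conn (e i) θs)) (e i) =
      -(-∑ i, g (conn (e i) (S θs)) (e i))
        - g θs θs * (∑ i, g (S (e i)) (e i))
        + (Fintype.card ι : C) * g θs (S θs) := by

  have key : ∀ X Y : VF, (∑ i, g X (e i) * g Y (e i)) = g X Y := by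
    intro X Y
    conv_rhs => rw [hexp Y]
    rw [map_sum]
    simp only [map_smul, smul_eq_mul]
    exact Finset.sum_congr rfl fun i _ => mul_comm _ _
  have h : ∀ i, g (S (conn (e i) θs)) (e i) = g (conn (e i) (S θs)) (e i)
      - g (S θs) (e i) * g θs (e i) - g θs θs * g (S (e i)) (e i)
      + g (S θs) θs * g (e i) (e i) + g θs (e i) * g (S θs) (e i) := by
    intro i
    have h1 := congrArg (fun V => g V (e i)) (hSder (e i) θs)
    simp only [map_sub, map_add, map_smul, LinearMap.sub_apply, LinearMap.add_apply,
      LinearMap.smul_apply, smul_eq_mul] at h1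
    have e1 : g (S (e i)) θs = g (S θs) (e i) := by rw [hSsym, gsymm]
    have e2 : g (e i) θs = g θs (e i) := gsymm _ _
    rw [e1, e2] at h1
    linear_combination -h1
  rw [Finset.sum_congr rfl fun i _ => h i]
  have hee : ∀ i, g (e i) (e i) = 1 := fun i => by simp [horth]
  simp only [Finset.sum_add_distrib, Finset.sum_sub_distrib, ← Finset.mul_sum, key,
    hee, Finset.sum_const, nsmul_eq_mul, mul_one]
  have : g (S θs) θs = g θs (S θs) := gsymm _ _
  ring_nf
  rw [this, Fintype.card]
  ring
end

section
/- Let ξ be a unit vector field on a Riemannian manifold satisfying ∇_X ξ = −θ(ξ)X + ⟨X,ξ⟩θ♯, and let P be a ∇-parallel self-adjoint involution. Then d(⟨ξ, Pξ⟩) = 2(θ(Pξ)ξ♭ − θ(ξ)(Pξ)♭). In particular, if θ(ξ) = 0 and θ(Pξ) = 0, then ⟨ξ, Pξ⟩ is locally constant. -/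
/-- Let `ξ` be a unit vector field on a Riemannian manifold satisfying
`∇_X ξ = −θ(ξ)X + ⟨X,ξ⟩θ♯`, and let `P` be a `∇`-parallel self-adjoint involution. Then
`d(⟨ξ, Pξ⟩) = 2(θ(Pξ)ξ♭ − θ(ξ)(Pξ)♭)`. In particular, if `θ(ξ) = 0` and `θ(Pξ) = 0`,
then `⟨ξ, Pξ⟩` is locally constant.

We model the geometry algebraically: `C` is the commutative ℝ-algebra of smooth functions,
`VF` the `C`-module of vector fields, `act` the derivation action (so
`d f (X) = act X f`, and `f` is locally constant iff `act X f = 0` for all `X`), `g` the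
metric, `conn` the Levi-Civita connection, and `θs = θ♯` (so `θ X = g(θ♯, X)`);
vector fields are identified with 1-forms via `g`. -/
theorem d_inner_xi_Pxi {C VF : Type*} [CommRing C] [Algebra ℝ C]
    [AddCommGroup VF] [Module C VF]
    (act : VF → C → C) (bracket : VF → VF → VF)
    (g : VF →ₗ[C] VF →ₗ[C] C) (conn : VF → VF → VF)
    (gsymm : ∀ X Y : VF, g X Y = g Y X)
    (conn_addY : ∀ X Y Z : VF, conn X (Y + Z) = conn X Y + conn X Z)
    (conn_smulY : ∀ (X : VF) (f : C) (Y : VF), conn X (f • Y) = act X f • Y + f • conn X Y)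
    (torsion_free : ∀ X Y : VF, conn X Y - conn Y X = bracket X Y)
    (conn_metric : ∀ X Y Z : VF, act X (g Y Z) = g (conn X Y) Z + g Y (conn X Z))
    (θ : VF → C) (θs : VF) (hθs : ∀ X : VF, g θs X = θ X)
    (ξ : VF) (hunit : g ξ ξ = 1)
    (hconnξ : ∀ X : VF, conn X ξ = -(θ ξ) • X + g X ξ • θs)
    (P : VF →ₗ[C] VF)
    (hPsym : ∀ X Y : VF, g (P X) Y = g X (P Y)) (hPinv : ∀ X : VF, P (P X) = X)
    (hPpar : ∀ X Y : VF, conn X (P Y) = P (conn X Y)) :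
    (∀ X : VF, act X (g ξ (P ξ)) =
      2 * (θ (P ξ) * g ξ X - θ ξ * g (P ξ) X)) ∧
    (θ ξ = 0 → θ (P ξ) = 0 → ∀ X : VF, act X (g ξ (P ξ)) = 0) := by
  have hθP : g (P ξ) θs = θ (P ξ) := by rw [gsymm, hθs]
  have hξPθ : g ξ (P θs) = θ (P ξ) := by rw [← hPsym, gsymm, hθs]
  have main : ∀ X : VF, act X (g ξ (P ξ)) =
      2 * (θ (P ξ) * g ξ X - θ ξ * g (P ξ) X) := by
    intro X
    rw [conn_metric, hPpar, hconnξ]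
    simp only [map_add, map_smul, map_neg, LinearMap.add_apply, LinearMap.smul_apply,
      LinearMap.neg_apply, smul_eq_mul, neg_mul]
    rw [hθs, ← hPsym ξ X, hξPθ, gsymm X ξ, gsymm X (P ξ), gsymm ξ X]
    ring
  refine ⟨main, fun h1 h2 X => ?_⟩
  rw [main X, h1, h2]
  ring
end
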